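/- AST is many-one reducible to EXP: the computable map sending (Q, η), with Q a pGCL program, to (P, η, v, 1), where v is a variable not occurring in Q and P is the program v := 0; Q; v := 1, satisfies Pr_{Q,η}(↓) = 1 iff E_{P,η}(v) = 1, i.e., (Q, η) ∈ AST iff (P, η, v, 1) ∈ EXP. -/

import Mathlib

/-!
Formalization of the framework of Kaminski & Katoen,
"On the Hardness of Almost-Sure Termination".

* pGCL syntax (probabilistic guarded command language), where the constant
  `Prog.term` plays the role of the termination symbol ↓ (so a configuration,
  i.e. an element of Prog ∪ {↓} closed under `;`, is just a `Prog`);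
* small-step operational semantics on states ⟨P, η, a, θ⟩;
* the computable state-successor function `T`;
* expected outcomes, termination probabilities, expected runtimes (in ℝ≥0∞);
* the problem sets LEXP, REXP, EXP, AST, UAST, PAST, UPAST, H, UH, co-UH
  as sets of natural-number codes (via explicit structural encodings);
* the arithmetical hierarchy over ℕ, many-one reducibility (Mathlib's
  `ManyOneReducible`), hardness and completeness.
-/

open scoped NNRat NNReal ENNReal

namespace PGCLHardness

/-- Program variables: a countably infinite set. -/
abbrev Var : Type := ℕ

/-- Variable valuations `η : Var → ℚ≥0` (finitely supported, so that they
form a recursive domain). -/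
abbrev V : Type := Var →₀ ℚ≥0

/-- Arithmetic expressions over `Var`. -/
inductive AExp : Type
  | const : ℚ → AExp
  | var : Var → AExp
  | add : AExp → AExp → AExp
  | sub : AExp → AExp → AExp
  | mul : AExp → AExp → AExp

/-- Evaluation ⟦e⟧_η of an arithmetic expression. -/
def AExp.eval (η : V) : AExp → ℚ
  | .const q => q
  | .var v => (η v : ℚ)
  | .add e₁ e₂ => e₁.eval η + e₂.eval η
  | .sub e₁ e₂ => e₁.eval η - e₂.eval η
  | .mul e₁ e₂ => e₁.eval η * e₂.eval η

/-- Boolean expressions over arithmetic expressions. -/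
inductive BExp : Type
  | lt : AExp → AExp → BExp
  | le : AExp → AExp → BExp
  | eq : AExp → AExp → BExp
  | not : BExp → BExp
  | and : BExp → BExp → BExp
  | or : BExp → BExp → BExp

/-- Evaluation ⟦b⟧_η of a Boolean expression. -/
def BExp.eval (η : V) : BExp → Bool
  | .lt e₁ e₂ => decide (e₁.eval η < e₂.eval η)
  | .le e₁ e₂ => decide (e₁.eval η ≤ e₂.eval η)
  | .eq e₁ e₂ => decide (e₁.eval η = e₂.eval η)
  | .not b => !(b.eval η)
  | .and b₁ b₂ => (b₁.eval η) && (b₂.eval η)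
  | .or b₁ b₂ => (b₁.eval η) || (b₂.eval η)

/-- pGCL programs:
`v := e  |  P;P  |  {P}[p]{P} (p ∈ [0,1] ∩ ℚ)  |  WHILE (b) {P}`,
together with the termination symbol ↓ (`Prog.term`), so that configurations
such as `↓;P₂` arising in the operational semantics are representable. -/
inductive Prog : Type
  | term : Prog                                   -- the symbol ↓
  | assign : Var → AExp → Prog
  | seq : Prog → Prog → Prog
  | choice : (p : ℚ≥0) → p ≤ 1 → Prog → Prog → Prog
  | whileDo : BExp → Prog → Prog

/-- Ordinary (non-probabilistic) programs: no probabilistic choice occurs. -/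
def Prog.Ordinary : Prog → Prop
  | .term => True
  | .assign _ _ => True
  | .seq P₁ P₂ => P₁.Ordinary ∧ P₂.Ordinary
  | .choice _ _ _ _ => False
  | .whileDo _ P => P.Ordinary

/-- `e.Mentions v`: the variable `v` occurs in the arithmetic expression `e`. -/
def AExp.Mentions : AExp → Var → Prop
  | .const _, _ => False
  | .var u, v => u = v
  | .add e₁ e₂, v | .sub e₁ e₂, v | .mul e₁ e₂, v => e₁.Mentions v ∨ e₂.Mentions v

/-- `b.Mentions v`: the variable `v` occurs in the Boolean expression `b`. -/
def BExp.Mentions : BExp → Var → Prop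
  | .lt e₁ e₂, v | .le e₁ e₂, v | .eq e₁ e₂, v => e₁.Mentions v ∨ e₂.Mentions v
  | .not b, v => b.Mentions v
  | .and b₁ b₂, v | .or b₁ b₂, v => b₁.Mentions v ∨ b₂.Mentions v

/-- `P.Mentions v`: the variable `v` occurs in the program `P`. -/
def Prog.Mentions : Prog → Var → Prop
  | .term, _ => False
  | .assign u e, v => u = v ∨ e.Mentions v
  | .seq P₁ P₂, v => P₁.Mentions v ∨ P₂.Mentions v
  | .choice _ _ P₁ P₂, v => P₁.Mentions v ∨ P₂.Mentions v
  | .whileDo b P, v => b.Mentions v ∨ P.Mentions v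

/-- Program states ⟨P, η, a, θ⟩: current configuration (a program or ↓),
variable valuation, probability of the probabilistic choices made so far,
and the sequence θ ∈ {L,R}* of those choices (`true` = L, `false` = R). -/
structure State : Type where
  conf : Prog
  val : V
  prob : ℚ≥0
  hist : List Bool

/-- Clipping a rational to a nonnegative rational: `max {q, 0}`. -/
def clip (q : ℚ) : ℚ≥0 := q.toNNRat

/-- The small-step operational semantics `⊢` of pGCL: the smallest relation
satisfying the rules (assign), (concat1), (concat2), (prob1), (prob2),
(while1), (while2). -/
inductive Step : State → State → Prop
  | assign (v : Var) (e : AExp) (η : V) (a : ℚ≥0) (θ : List Bool) :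
      Step ⟨.assign v e, η, a, θ⟩ ⟨.term, Finsupp.update η v (clip (e.eval η)), a, θ⟩
  | concat1 {P₁ P₁' : Prog} {η η' : V} {a a' : ℚ≥0} {θ θ' : List Bool} (P₂ : Prog) :
      Step ⟨P₁, η, a, θ⟩ ⟨P₁', η', a', θ'⟩ →
      Step ⟨.seq P₁ P₂, η, a, θ⟩ ⟨.seq P₁' P₂, η', a', θ'⟩
  | concat2 (P₂ : Prog) (η : V) (a : ℚ≥0) (θ : List Bool) :
      Step ⟨.seq .term P₂, η, a, θ⟩ ⟨P₂, η, a, θ⟩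
  | prob1 (p : ℚ≥0) (hp : p ≤ 1) (P₁ P₂ : Prog) (η : V) (a : ℚ≥0) (θ : List Bool) :
      Step ⟨.choice p hp P₁ P₂, η, a, θ⟩ ⟨P₁, η, a * p, θ ++ [true]⟩
  | prob2 (p : ℚ≥0) (hp : p ≤ 1) (P₁ P₂ : Prog) (η : V) (a : ℚ≥0) (θ : List Bool) :
      Step ⟨.choice p hp P₁ P₂, η, a, θ⟩ ⟨P₂, η, a * (1 - p), θ ++ [false]⟩
  | while1 {b : BExp} {η : V} (P : Prog) (a : ℚ≥0) (θ : List Bool) :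
      b.eval η = true →
      Step ⟨.whileDo b P, η, a, θ⟩ ⟨.seq P (.whileDo b P), η, a, θ⟩
  | while2 {b : BExp} {η : V} (P : Prog) (a : ℚ≥0) (θ : List Bool) :
      b.eval η = false →
      Step ⟨.whileDo b P, η, a, θ⟩ ⟨.term, η, a, θ⟩

/-- Deterministic one-step function: performs the unique step from a
configuration, resolving a probabilistic choice (if any) according to the
first letter of `w`, and returns the new state together with the unconsumed
rest of `w`; `none` if no step is possible. -/
noncomputable def stepD : Prog → V → ℚ≥0 → List Bool → List Bool → Option (State × List Bool)
  | .term, _, _, _, _ => none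
  | .assign v e, η, a, θ, w =>
      some (⟨.term, Finsupp.update η v (clip (e.eval η)), a, θ⟩, w)
  | .seq .term P₂, η, a, θ, w => some (⟨P₂, η, a, θ⟩, w)
  | .seq P₁ P₂, η, a, θ, w =>
      match stepD P₁ η a θ w with
      | some (τ, w') => some (⟨.seq τ.conf P₂, τ.val, τ.prob, τ.hist⟩, w')
      | none => none
  | .choice p _ P₁ _, η, a, θ, true :: w' => some (⟨P₁, η, a * p, θ ++ [true]⟩, w')
  | .choice p _ _ P₂, η, a, θ, false :: w' => some (⟨P₂, η, a * (1 - p), θ ++ [false]⟩, w')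
  | .choice _ _ _ _, _, _, _, [] => none
  | .whileDo b P, η, a, θ, w =>
      if b.eval η then some (⟨.seq P (.whileDo b P), η, a, θ⟩, w)
      else some (⟨.term, η, a, θ⟩, w)

/-- The state-successor function `T_k(σ, w)`: the `k`-th successor of `σ`
w.r.t. `⊢`, where exactly `|w|` of the `k` steps are probabilistic choices,
resolved according to `w`; `⊥` (here: `none`) otherwise. -/
noncomputable def T : ℕ → State → List Bool → Option State
  | 0, σ, w => if w = [] then some σ else none
  | k + 1, σ, w =>
      match stepD σ.conf σ.val σ.prob σ.hist w with
      | some (τ, w') => T k τ w'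
      | none => none

/-- `α(σ)`: the probability `a` of reaching `σ` if `σ = ⟨↓, η, a, θ⟩` is a
terminal state, and `0` otherwise. -/
def alphaFn : Option State → ℚ≥0
  | some σ =>
      match σ.conf with
      | .term => σ.prob
      | _ => 0
  | none => 0

/-- `℘(σ, v)`: `η(v) · a` if `σ = ⟨↓, η, a, θ⟩` is a terminal state, and `0`
otherwise. -/
def wpFn : Option State → Var → ℚ≥0
  | some σ, v =>
      match σ.conf with
      | .term => σ.val v * σ.prob
      | _ => 0
  | none, _ => 0

/-- Coercion `ℚ≥0 → ℝ≥0∞`. -/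
noncomputable def toE (q : ℚ≥0) : ℝ≥0∞ := ((q : ℝ≥0) : ℝ≥0∞)

/-- The initial state ⟨P, η, 1, ε⟩. -/
def initState (P : Prog) (η : V) : State := ⟨P, η, 1, []⟩

/-- `Σ_{w ∈ {L,R}^{≤k}} ℘(T_k(⟨P,η,1,ε⟩, w), v)`. -/
noncomputable def preSum (P : Prog) (η : V) (v : Var) (k : ℕ) : ℝ≥0∞ :=
  ∑' w : List Bool, if w.length ≤ k then toE (wpFn (T k (initState P η) w) v) else 0

/-- The expected outcome `E_{P,η}(v)`. -/
noncomputable def ExpOut (P : Prog) (η : V) (v : Var) : ℝ≥0∞ :=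
  ∑' k : ℕ, preSum P η v k

/-- `Σ_{w ∈ {L,R}^{≤k}} α(T_k(⟨P,η,1,ε⟩, w))`. -/
noncomputable def alphaSum (P : Prog) (η : V) (k : ℕ) : ℝ≥0∞ :=
  ∑' w : List Bool, if w.length ≤ k then toE (alphaFn (T k (initState P η) w)) else 0

/-- The termination probability `Pr_{P,η}(↓)`. -/
noncomputable def TermProb (P : Prog) (η : V) : ℝ≥0∞ :=
  ∑' k : ℕ, alphaSum P η k

/-- The expected time until termination `E_{P,η}(↓)`. -/
noncomputable def ExpTime (P : Prog) (η : V) : ℝ≥0∞ :=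
  ∑' k : ℕ, (1 - alphaSum P η k)

/-- Partial sums `Σ_{k=0}^{y} Σ_{w ∈ {L,R}^{≤k}} ℘(T_k(⟨P,η,1,ε⟩, w), v)`. -/
noncomputable def preSumUpTo (P : Prog) (η : V) (v : Var) (y : ℕ) : ℝ≥0∞ :=
  ∑ k ∈ Finset.range (y + 1), preSum P η v k

/-- Partial sums `Σ_{k=0}^{ℓ} (1 - Σ_{w ∈ {L,R}^{≤k}} α(T_k(⟨P,η,1,ε⟩, w)))`. -/
noncomputable def alphaSumUpTo (P : Prog) (η : V) (ℓ : ℕ) : ℝ≥0∞ :=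
  ∑ k ∈ Finset.range (ℓ + 1), (1 - alphaSum P η k)

/-- `Q` halts (deterministically) on input `η`. -/
def HaltsOn (Q : Prog) (η : V) : Prop :=
  ∃ (k : ℕ) (η' : V), T k (initState Q η) [] = some ⟨.term, η', 1, []⟩

/-! ### Explicit structural encodings into ℕ -/

/-- Encoding of nonnegative rationals. -/
def encNN (q : ℚ≥0) : ℕ := Nat.pair q.num q.den

/-- Encoding of rationals. -/
def encQ (q : ℚ) : ℕ := Nat.pair (Encodable.encode q.num) q.den

/-- Encoding of arithmetic expressions. -/
def encAExp : AExp → ℕ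
  | .const q => Nat.pair 0 (encQ q)
  | .var v => Nat.pair 1 v
  | .add e₁ e₂ => Nat.pair 2 (Nat.pair (encAExp e₁) (encAExp e₂))
  | .sub e₁ e₂ => Nat.pair 3 (Nat.pair (encAExp e₁) (encAExp e₂))
  | .mul e₁ e₂ => Nat.pair 4 (Nat.pair (encAExp e₁) (encAExp e₂))

/-- Encoding of Boolean expressions. -/
def encBExp : BExp → ℕ
  | .lt e₁ e₂ => Nat.pair 0 (Nat.pair (encAExp e₁) (encAExp e₂))
  | .le e₁ e₂ => Nat.pair 1 (Nat.pair (encAExp e₁) (encAExp e₂))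
  | .eq e₁ e₂ => Nat.pair 2 (Nat.pair (encAExp e₁) (encAExp e₂))
  | .not b => Nat.pair 3 (encBExp b)
  | .and b₁ b₂ => Nat.pair 4 (Nat.pair (encBExp b₁) (encBExp b₂))
  | .or b₁ b₂ => Nat.pair 5 (Nat.pair (encBExp b₁) (encBExp b₂))

/-- Encoding of programs. -/
def encProg : Prog → ℕ
  | .term => Nat.pair 0 0
  | .assign v e => Nat.pair 1 (Nat.pair v (encAExp e))
  | .seq P₁ P₂ => Nat.pair 2 (Nat.pair (encProg P₁) (encProg P₂))
  | .choice p _ P₁ P₂ => Nat.pair 3 (Nat.pair (encNN p) (Nat.pair (encProg P₁) (encProg P₂)))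
  | .whileDo b P => Nat.pair 4 (Nat.pair (encBExp b) (encProg P))

/-- Encoding of valuations (via the sorted graph of the finitely supported
function). -/
def encV (η : V) : ℕ :=
  Encodable.encode ((η.support.sort (· ≤ ·)).map fun v => (v, encNN (η v)))

/-- Encoding of words over {L,R}. -/
def encWord (w : List Bool) : ℕ := Encodable.encode w

/-- Encoding of states. -/
def encState (σ : State) : ℕ :=
  Nat.pair (encProg σ.conf) (Nat.pair (encV σ.val) (Nat.pair (encNN σ.prob) (encWord σ.hist)))

/-- Encoding of `S ∪ {⊥}`. -/
def encOptState : Option State → ℕ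
  | none => 0
  | some σ => encState σ + 1

/-- Encoding of pairs (program, valuation). -/
def encPV (P : Prog) (η : V) : ℕ := Nat.pair (encProg P) (encV η)

/-- Encoding of tuples (program, valuation, variable, rational). -/
def encTup (P : Prog) (η : V) (v : Var) (q : ℚ≥0) : ℕ :=
  Nat.pair (encProg P) (Nat.pair (encV η) (Nat.pair v (encNN q)))

/-! ### The problem sets, as sets of codes -/

/-- `LEXP`: strict rational lower bounds on expected outcomes. -/
def LEXPset : Set ℕ :=
  {n | ∃ (P : Prog) (η : V) (v : Var) (q : ℚ≥0), n = encTup P η v q ∧ toE q < ExpOut P η v}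

/-- `REXP`: strict rational upper bounds on expected outcomes. -/
def REXPset : Set ℕ :=
  {n | ∃ (P : Prog) (η : V) (v : Var) (q : ℚ≥0), n = encTup P η v q ∧ ExpOut P η v < toE q}

/-- `EXP`: exact rational expected outcomes. -/
def EXPset : Set ℕ :=
  {n | ∃ (P : Prog) (η : V) (v : Var) (q : ℚ≥0), n = encTup P η v q ∧ ExpOut P η v = toE q}

/-- The halting problem `H` for ordinary programs. -/
def Hset : Set ℕ :=
  {n | ∃ (Q : Prog) (η : V), Q.Ordinary ∧ n = encPV Q η ∧ HaltsOn Q η}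

/-- The universal halting problem `UH` for ordinary programs. -/
def UHset : Set ℕ :=
  {n | ∃ Q : Prog, Q.Ordinary ∧ n = encProg Q ∧ ∀ η : V, HaltsOn Q η}

/-- The complement `co-UH = ordProg ∖ UH` of the universal halting problem. -/
def coUHset : Set ℕ :=
  {n | ∃ Q : Prog, Q.Ordinary ∧ n = encProg Q ∧ ¬ ∀ η : V, HaltsOn Q η}

/-- `AST`: almost-sure termination. -/
def ASTset : Set ℕ :=
  {n | ∃ (P : Prog) (η : V), n = encPV P η ∧ TermProb P η = 1}

/-- `UAST`: universal almost-sure termination. -/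
def UASTset : Set ℕ :=
  {n | ∃ P : Prog, n = encProg P ∧ ∀ η : V, TermProb P η = 1}

/-- `PAST`: positive almost-sure termination (finite expected runtime). -/
def PASTset : Set ℕ :=
  {n | ∃ (P : Prog) (η : V), n = encPV P η ∧ ExpTime P η < ⊤}

/-- `UPAST`: universal positive almost-sure termination. -/
def UPASTset : Set ℕ :=
  {n | ∃ P : Prog, n = encProg P ∧ ∀ η : V, ExpTime P η < ⊤}

/-! ### The arithmetical hierarchy over ℕ -/

/-- Decidable binary relations on ℕ. -/
def DecRel2 (R : ℕ → ℕ → Prop) : Prop :=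
  ComputablePred fun p : ℕ × ℕ => R p.1 p.2

/-- Decidable ternary relations on ℕ. -/
def DecRel3 (R : ℕ → ℕ → ℕ → Prop) : Prop :=
  ComputablePred fun p : ℕ × ℕ × ℕ => R p.1 p.2.1 p.2.2

/-- Decidable 4-ary relations on ℕ. -/
def DecRel4 (R : ℕ → ℕ → ℕ → ℕ → Prop) : Prop :=
  ComputablePred fun p : ℕ × ℕ × ℕ × ℕ => R p.1 p.2.1 p.2.2.1 p.2.2.2

/-- `A ∈ Σ₁⁰`: `x ∈ A ↔ ∃y R(x,y)` for a decidable `R`; equivalently, `A` is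
recursively enumerable. -/
def InSigma1 (A : Set ℕ) : Prop :=
  ∃ R : ℕ → ℕ → Prop, DecRel2 R ∧ ∀ x, x ∈ A ↔ ∃ y, R x y

/-- `A ∈ Π₁⁰`. -/
def InPi1 (A : Set ℕ) : Prop :=
  ∃ R : ℕ → ℕ → Prop, DecRel2 R ∧ ∀ x, x ∈ A ↔ ∀ y, R x y

/-- `A ∈ Σ₂⁰`: `x ∈ A ↔ ∃y₁∀y₂ R(x,y₁,y₂)` for a decidable `R`. -/
def InSigma2 (A : Set ℕ) : Prop :=
  ∃ R : ℕ → ℕ → ℕ → Prop, DecRel3 R ∧ ∀ x, x ∈ A ↔ ∃ y₁, ∀ y₂, R x y₁ y₂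

/-- `A ∈ Π₂⁰`: `x ∈ A ↔ ∀y₁∃y₂ R(x,y₁,y₂)` for a decidable `R`. -/
def InPi2 (A : Set ℕ) : Prop :=
  ∃ R : ℕ → ℕ → ℕ → Prop, DecRel3 R ∧ ∀ x, x ∈ A ↔ ∀ y₁, ∃ y₂, R x y₁ y₂

/-- `A ∈ Σ₃⁰`: `x ∈ A ↔ ∃y₁∀y₂∃y₃ R(x,y₁,y₂,y₃)` for a decidable `R`. -/
def InSigma3 (A : Set ℕ) : Prop :=
  ∃ R : ℕ → ℕ → ℕ → ℕ → Prop, DecRel4 R ∧ ∀ x, x ∈ A ↔ ∃ y₁, ∀ y₂, ∃ y₃, R x y₁ y₂ y₃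

/-- `A ∈ Π₃⁰`: `x ∈ A ↔ ∀y₁∃y₂∀y₃ R(x,y₁,y₂,y₃)` for a decidable `R`. -/
def InPi3 (A : Set ℕ) : Prop :=
  ∃ R : ℕ → ℕ → ℕ → ℕ → Prop, DecRel4 R ∧ ∀ x, x ∈ A ↔ ∀ y₁, ∃ y₂, ∀ y₃, R x y₁ y₂ y₃

/-- `A` is Σ₁⁰-hard: every Σ₁⁰ set many-one reduces to `A`. -/
def Sigma1Hard (A : Set ℕ) : Prop :=
  ∀ C : Set ℕ, InSigma1 C → ManyOneReducible (· ∈ C) (· ∈ A)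

/-- `A` is Σ₂⁰-hard. -/
def Sigma2Hard (A : Set ℕ) : Prop :=
  ∀ C : Set ℕ, InSigma2 C → ManyOneReducible (· ∈ C) (· ∈ A)

/-- `A` is Π₂⁰-hard. -/
def Pi2Hard (A : Set ℕ) : Prop :=
  ∀ C : Set ℕ, InPi2 C → ManyOneReducible (· ∈ C) (· ∈ A)

/-- `A` is Π₃⁰-hard. -/
def Pi3Hard (A : Set ℕ) : Prop :=
  ∀ C : Set ℕ, InPi3 C → ManyOneReducible (· ∈ C) (· ∈ A)

/-- Σ₁⁰-completeness. -/
def Sigma1Complete (A : Set ℕ) : Prop := InSigma1 A ∧ Sigma1Hard A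

/-- Σ₂⁰-completeness. -/
def Sigma2Complete (A : Set ℕ) : Prop := InSigma2 A ∧ Sigma2Hard A

/-- Π₂⁰-completeness. -/
def Pi2Complete (A : Set ℕ) : Prop := InPi2 A ∧ Pi2Hard A

/-- Π₃⁰-completeness. -/
def Pi3Complete (A : Set ℕ) : Prop := InPi3 A ∧ Pi3Hard A

/-- A fixed valuation (all variables 0). -/
def eta0 : V := 0

/-- `1/2 ≤ 1` in `ℚ≥0`. -/
theorem half_le_one : (1 / 2 : ℚ≥0) ≤ 1 := by
  rw [div_le_one (by norm_num : (0:ℚ≥0) < 2)]; norm_num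


/-! ### Auxiliary lemmas for the reduction AST ≤ₘ EXP -/

section Aux

lemma clip_zero : clip ((AExp.const 0).eval η) = 0 := by
  simp [AExp.eval, clip]

lemma clip_one : clip ((AExp.const 1).eval η) = 1 := by
  simp [AExp.eval, clip]

lemma AExp.eval_update {e : AExp} {v : Var} (h : ¬ e.Mentions v) (η : V) (q : ℚ≥0) :
    e.eval (Finsupp.update η v q) = e.eval η := by
  induction e with
  | const => rfl
  | var u =>
      simp [AExp.Mentions] at h
      simp [AExp.eval, Finsupp.coe_update, Function.update_of_ne h]
  | add e₁ e₂ ih₁ ih₂ =>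
      simp [AExp.Mentions] at h
      simp [AExp.eval, ih₁ h.1, ih₂ h.2]
  | sub e₁ e₂ ih₁ ih₂ =>
      simp [AExp.Mentions] at h
      simp [AExp.eval, ih₁ h.1, ih₂ h.2]
  | mul e₁ e₂ ih₁ ih₂ =>
      simp [AExp.Mentions] at h
      simp [AExp.eval, ih₁ h.1, ih₂ h.2]

lemma BExp.eval_update {b : BExp} {v : Var} (h : ¬ b.Mentions v) (η : V) (q : ℚ≥0) :
    b.eval (Finsupp.update η v q) = b.eval η := by
  induction b with
  | lt e₁ e₂ =>
      simp [BExp.Mentions] at h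
      simp [BExp.eval, AExp.eval_update h.1, AExp.eval_update h.2]
  | le e₁ e₂ =>
      simp [BExp.Mentions] at h
      simp [BExp.eval, AExp.eval_update h.1, AExp.eval_update h.2]
  | eq e₁ e₂ =>
      simp [BExp.Mentions] at h
      simp [BExp.eval, AExp.eval_update h.1, AExp.eval_update h.2]
  | not b ih =>
      simp [BExp.Mentions] at h
      simp [BExp.eval, ih h]
  | and b₁ b₂ ih₁ ih₂ =>
      simp [BExp.Mentions] at h
      simp [BExp.eval, ih₁ h.1, ih₂ h.2]
  | or b₁ b₂ ih₁ ih₂ =>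
      simp [BExp.Mentions] at h
      simp [BExp.eval, ih₁ h.1, ih₂ h.2]

lemma updt_comm (η : V) {u v : Var} (h : u ≠ v) (x q : ℚ≥0) :
    Finsupp.update (Finsupp.update η v q) u x = Finsupp.update (Finsupp.update η u x) v q := by
  ext w
  simp only [Finsupp.coe_update]
  rw [Function.update_comm h.symm]

/-- Lifting into a sequential context. -/
def liftSeq (R : Prog) : State × List Bool → State × List Bool :=
  fun p => (⟨.seq p.1.conf R, p.1.val, p.1.prob, p.1.hist⟩, p.2)

/-- Updating the valuation of a state at `v`. -/
noncomputable def updV (v : Var) (q : ℚ≥0) : State × List Bool → State × List Bool :=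
  fun p => (⟨p.1.conf, Finsupp.update p.1.val v q, p.1.prob, p.1.hist⟩, p.2)

lemma stepD_seq {c : Prog} (hc : c ≠ .term) (R : Prog) (η : V) (a : ℚ≥0)
    (θ w : List Bool) :
    stepD (.seq c R) η a θ w = (stepD c η a θ w).map (liftSeq R) := by
  cases c with
  | term => exact absurd rfl hc
  | assign u e => simp [stepD, liftSeq]
  | seq c₁ c₂ =>
      simp only [stepD]
      cases h : stepD (.seq c₁ c₂) η a θ w with
      | none => simp
      | some p => simp [liftSeq]
  | choice p hp c₁ c₂ =>
      cases w with
      | nil => simp [stepD]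
      | cons x w' => cases x <;> simp [stepD, liftSeq]
  | whileDo b c =>
      cases hb : BExp.eval η b <;> simp [stepD, hb, liftSeq]

lemma stepD_update {c : Prog} {v : Var} (hc : ¬ c.Mentions v) (q : ℚ≥0) (η : V)
    (a : ℚ≥0) (θ w : List Bool) :
    stepD c (Finsupp.update η v q) a θ w = (stepD c η a θ w).map (updV v q) := by
  induction c generalizing η a θ w with
  | term => simp [stepD]
  | assign u e =>
      simp only [Prog.Mentions, not_or] at hc
      simp [stepD, updV, AExp.eval_update hc.2, updt_comm η hc.1]
  | seq c₁ c₂ ih₁ ih₂ =>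
      simp only [Prog.Mentions, not_or] at hc
      by_cases h1 : c₁ = .term
      · subst h1; simp [stepD, updV]
      · rw [stepD_seq h1, stepD_seq h1, ih₁ hc.1, Option.map_map, Option.map_map]
        congr 1
  | choice p hp c₁ c₂ =>
      cases w with
      | nil => simp [stepD]
      | cons x w' => cases x <;> simp [stepD, updV]
  | whileDo b c =>
      simp only [Prog.Mentions, not_or] at hc
      cases hb : BExp.eval η b <;>
        simp [stepD, hb, BExp.eval_update hc.1, updV]

lemma stepD_mentions {c : Prog} {v : Var} {η : V} {a : ℚ≥0} {θ w : List Bool}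
    {τ : State} {w' : List Bool}
    (h : stepD c η a θ w = some (τ, w')) (hc : ¬ c.Mentions v) :
    ¬ τ.conf.Mentions v := by
  induction c generalizing η a θ w τ w' with
  | term => simp [stepD] at h
  | assign u e =>
      simp [stepD] at h
      rw [← h.1]
      simp [Prog.Mentions]
  | seq c₁ c₂ ih₁ ih₂ =>
      simp only [Prog.Mentions, not_or] at hc
      by_cases h1 : c₁ = .term
      · subst h1
        simp [stepD] at h
        rw [← h.1]
        exact hc.2
      · rw [stepD_seq h1] at h
        cases h2 : stepD c₁ η a θ w with
        | none => rw [h2] at h; simp at h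
        | some p =>
            rw [h2] at h
            simp [liftSeq] at h
            rw [← h.1]
            simp [Prog.Mentions]
            exact ⟨ih₁ (by rw [h2]) hc.1, hc.2⟩
  | choice p hp c₁ c₂ =>
      simp only [Prog.Mentions, not_or] at hc
      cases w with
      | nil => simp [stepD] at h
      | cons x w' =>
          cases x <;> simp [stepD] at h <;> rw [← h.1]
          · exact hc.2
          · exact hc.1
  | whileDo b c =>
      simp only [Prog.Mentions, not_or] at hc
      cases hb : BExp.eval η b <;> simp [stepD, hb] at h <;> rw [← h.1]
      · simp [Prog.Mentions]
      · simp [Prog.Mentions]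
        exact ⟨hc.2, hc.1, hc.2⟩

lemma stepD_suffix {c : Prog} {η : V} {a : ℚ≥0} {θ w : List Bool}
    {τ : State} {w' : List Bool} (h : stepD c η a θ w = some (τ, w')) :
    w = w' ∨ ∃ x, w = x :: w' := by
  induction c generalizing η a θ w τ w' with
  | term => simp [stepD] at h
  | assign u e => simp [stepD] at h; exact Or.inl h.2
  | seq c₁ c₂ ih₁ ih₂ =>
      by_cases h1 : c₁ = .term
      · subst h1; simp [stepD] at h; exact Or.inl h.2
      · rw [stepD_seq h1] at h
        cases h2 : stepD c₁ η a θ w with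
        | none => rw [h2] at h; simp at h
        | some p =>
            rw [h2] at h
            simp [liftSeq] at h
            obtain ⟨τ₁, w₁⟩ := p
            have := ih₁ h2
            simp at h
            rw [h.2] at this
            exact this
  | choice p hp c₁ c₂ =>
      cases w with
      | nil => simp [stepD] at h
      | cons x w₂ =>
          cases x <;> simp [stepD] at h <;> exact Or.inr ⟨_, by rw [h.2]⟩
  | whileDo b c =>
      cases hb : BExp.eval η b <;> simp [stepD, hb] at h <;> exact Or.inl h.2

lemma T_zero (σ : State) (w : List Bool) :
    T 0 σ w = if w = [] then some σ else none := rfl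

lemma T_succ (k : ℕ) (σ : State) (w : List Bool) :
    T (k + 1) σ w =
      match stepD σ.conf σ.val σ.prob σ.hist w with
      | some (τ, w') => T k τ w'
      | none => none := rfl

lemma T_some_length : ∀ (k : ℕ) (σ : State) (w : List Bool) (τ : State),
    T k σ w = some τ → w.length ≤ k := by
  intro k
  induction k with
  | zero =>
      intro σ w τ h
      rw [T_zero] at h
      split at h
      · simp_all
      · simp at h
  | succ k ih =>
      intro σ w τ h
      rw [T_succ] at h
      cases h2 : stepD σ.conf σ.val σ.prob σ.hist w with
      | none => rw [h2] at h; simp at h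
      | some p =>
          obtain ⟨τ', w'⟩ := p
          rw [h2] at h
          have hlen := ih _ _ _ h
          rcases stepD_suffix h2 with h3 | ⟨x, h3⟩ <;> subst h3 <;> simp <;> omega

lemma alphaFn_term (η : V) (a : ℚ≥0) (θ : List Bool) :
    alphaFn (some ⟨.term, η, a, θ⟩) = a := rfl

lemma alphaFn_ne {c : Prog} (hc : c ≠ .term) (η : V) (a : ℚ≥0) (θ : List Bool) :
    alphaFn (some ⟨c, η, a, θ⟩) = 0 := by
  cases c <;> simp [alphaFn] <;> exact absurd rfl hc

lemma wpFn_ne {c : Prog} (hc : c ≠ .term) (η : V) (a : ℚ≥0) (θ : List Bool) (v : Var) :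
    wpFn (some ⟨c, η, a, θ⟩) v = 0 := by
  cases c <;> simp [wpFn] <;> exact absurd rfl hc

lemma T_term (k : ℕ) (η : V) (a : ℚ≥0) (θ w : List Bool) :
    T k (⟨.term, η, a, θ⟩ : State) w =
      if k = 0 ∧ w = [] then some ⟨.term, η, a, θ⟩ else none := by
  cases k with
  | zero => rw [T_zero]; by_cases h : w = [] <;> simp [h]
  | succ k => rw [T_succ]; simp [stepD]

lemma wp_T0_seq (c R : Prog) (η : V) (a : ℚ≥0) (θ w : List Bool) (v : Var) :
    wpFn (T 0 ⟨.seq c R, η, a, θ⟩ w) v = 0 := by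
  rw [T_zero]
  split
  · exact wpFn_ne (by simp) η a θ v
  · rfl

lemma wp_T1_seq (c : Prog) (u : Var) (e : AExp) (η : V) (a : ℚ≥0) (θ w : List Bool)
    (v : Var) :
    wpFn (T 1 ⟨.seq c (.assign u e), η, a, θ⟩ w) v = 0 := by
  rw [T_succ]
  by_cases h1 : c = .term
  · subst h1
    simp only [stepD]
    rw [T_zero]
    split
    · exact wpFn_ne (by simp) η a θ v
    · rfl
  · rw [stepD_seq h1]
    cases h2 : stepD c η a θ w with
    | none => rfl
    | some p => exact wp_T0_seq _ _ _ _ _ _ _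

lemma sim_term (v : Var) (k : ℕ) (η : V) (a : ℚ≥0) (θ w : List Bool) :
    wpFn (T (k + 2) ⟨.seq .term (.assign v (.const 1)), Finsupp.update η v 0, a, θ⟩ w) v
      = alphaFn (T k (⟨.term, η, a, θ⟩ : State) w) := by
  rw [show k + 2 = (k + 1) + 1 by omega, T_succ]
  simp only [stepD]
  rw [T_succ]
  simp only [stepD]
  rw [clip_one, T_term, T_term]
  split
  · simp [wpFn, alphaFn, Finsupp.coe_update]
  · rfl

lemma sim (v : Var) : ∀ (k : ℕ) (c : Prog), ¬ c.Mentions v → ∀ (η : V) (a : ℚ≥0)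
    (θ w : List Bool),
    wpFn (T (k + 2) ⟨.seq c (.assign v (.const 1)), Finsupp.update η v 0, a, θ⟩ w) v
      = alphaFn (T k ⟨c, η, a, θ⟩ w) := by
  intro k
  induction k with
  | zero =>
      intro c hc η a θ w
      by_cases h1 : c = .term
      · subst h1; exact sim_term v 0 η a θ w
      · rw [show (0 : ℕ) + 2 = 1 + 1 by omega, T_succ]
        simp only
        rw [stepD_seq h1, stepD_update hc]
        rw [T_zero]
        cases h2 : stepD c η a θ w with
        | none =>
            simp only [Option.map_none]
            split
            · exact (alphaFn_ne h1 η a θ).symm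
            · rfl
        | some p =>
            obtain ⟨τ, w'⟩ := p
            simp only [Option.map_some, Option.map_map, liftSeq, updV]
            rw [wp_T1_seq]
            split
            · exact (alphaFn_ne h1 η a θ).symm
            · rfl
  | succ k ih =>
      intro c hc η a θ w
      by_cases h1 : c = .term
      · subst h1; exact sim_term v (k + 1) η a θ w
      · rw [show k + 1 + 2 = (k + 2) + 1 by omega, T_succ, T_succ]
        simp only
        rw [stepD_seq h1, stepD_update hc]
        cases h2 : stepD c η a θ w with
        | none => rfl
        | some p =>
            obtain ⟨⟨c', η', a', θ'⟩, w'⟩ := p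
            simp only [Option.map_some, Option.map_map, liftSeq, updV]
            exact ih c' (stepD_mentions h2 hc) η' a' θ' w'

lemma toE_zero : toE 0 = 0 := by simp [toE]

lemma toE_one : toE 1 = 1 := by simp [toE]

lemma step2 (Q : Prog) (v : Var) (η : V) (j : ℕ) (w : List Bool) :
    T (j + 2)
        (initState (.seq (.assign v (.const 0)) (.seq Q (.assign v (.const 1)))) η) w
      = T j ⟨.seq Q (.assign v (.const 1)), Finsupp.update η v 0, 1, []⟩ w := by
  rw [show j + 2 = (j + 1) + 1 by omega, T_succ]
  have e1 : stepD (Prog.seq (.assign v (.const 0)) (.seq Q (.assign v (.const 1)))) η 1 [] w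
      = some (⟨.seq .term (.seq Q (.assign v (.const 1))), Finsupp.update η v 0, 1, []⟩, w) := by
    rw [stepD_seq (by simp)]
    simp [stepD, clip_zero, liftSeq]
  simp only [initState, e1]
  rw [T_succ]
  simp only [stepD]

lemma key_eq {Q : Prog} {v : Var} (hv : ¬ Q.Mentions v) (η : V) (k : ℕ) (w : List Bool) :
    wpFn (T (k + 4)
        (initState (.seq (.assign v (.const 0)) (.seq Q (.assign v (.const 1)))) η) w) v
      = alphaFn (T k (initState Q η) w) := by
  rw [show k + 4 = (k + 2) + 2 by omega, step2]
  exact sim v k Q hv η 1 [] w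

lemma expOut_eq {Q : Prog} {v : Var} (hv : ¬ Q.Mentions v) (η : V) :
    ExpOut (.seq (.assign v (.const 0)) (.seq Q (.assign v (.const 1)))) η v
      = TermProb Q η := by
  set P : Prog := .seq (.assign v (.const 0)) (.seq Q (.assign v (.const 1))) with hP
  have h4 : ∀ k, preSum P η v (k + 4) = alphaSum Q η k := by
    intro k
    unfold preSum alphaSum
    apply tsum_congr
    intro w
    by_cases h1 : w.length ≤ k
    · rw [if_pos (by omega), if_pos h1, key_eq hv]
    · have hz : alphaFn (T k (initState Q η) w) = 0 := by
        cases h : T k (initState Q η) w with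
        | none => rfl
        | some τ => exact absurd (T_some_length _ _ _ _ h) h1
      rw [if_neg h1]
      by_cases h2 : w.length ≤ k + 4
      · rw [if_pos h2, key_eq hv, hz, toE_zero]
      · rw [if_neg h2]
  have hsmall : ∀ k < 4, preSum P η v k = 0 := by
    intro k hk
    unfold preSum
    rw [ENNReal.tsum_eq_zero]
    intro w
    have hz : wpFn (T k (initState P η) w) v = 0 := by
      interval_cases k
      · rw [show (0:ℕ) = 0 by rfl]
        rw [T_zero]
        split
        · exact wpFn_ne (by simp [hP]) η 1 [] v
        · rfl
      · rw [T_succ]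
        have e1 : stepD (initState P η).conf (initState P η).val (initState P η).prob
            (initState P η).hist w
            = some (⟨.seq .term (.seq Q (.assign v (.const 1))), Finsupp.update η v 0, 1, []⟩, w) := by
          simp only [initState, hP]
          rw [stepD_seq (by simp)]
          simp [stepD, clip_zero, liftSeq]
        rw [e1]
        exact wp_T0_seq _ _ _ _ _ _ _
      · rw [show (2:ℕ) = 0 + 2 by omega, step2 Q v η 0 w]
        exact wp_T0_seq _ _ _ _ _ _ _
      · rw [show (3:ℕ) = 1 + 2 by omega, step2 Q v η 1 w]
        exact wp_T1_seq _ _ _ _ _ _ _ _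
    rw [hz, toE_zero]
    split <;> rfl
  unfold ExpOut TermProb
  calc ∑' k, preSum P η v k = ∑' k, preSum P η v (k + 4) := by
        refine (Function.Injective.tsum_eq (g := fun k => k + 4)
          (fun a b hab => by simpa using hab) ?_).symm
        intro x hx
        rcases lt_or_ge x 4 with h | h
        · exact absurd (hsmall x h) hx
        · exact ⟨x - 4, show x - 4 + 4 = x by omega⟩
    _ = ∑' k, alphaSum Q η k := tsum_congr h4

lemma mentions_le_encAExp : ∀ (e : AExp) (u : Var), e.Mentions u → u ≤ encAExp e := by
  intro e
  induction e with
  | const q => intro u h; exact absurd h (by simp [AExp.Mentions])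
  | var w =>
      intro u h
      cases h
      exact le_trans (Nat.right_le_pair 1 w) le_rfl
  | add e₁ e₂ ih₁ ih₂ =>
      intro u h
      rcases h with h | h
      · exact le_trans (ih₁ u h) (le_trans (Nat.left_le_pair _ _) (Nat.right_le_pair _ _))
      · exact le_trans (ih₂ u h) (le_trans (Nat.right_le_pair _ _) (Nat.right_le_pair _ _))
  | sub e₁ e₂ ih₁ ih₂ =>
      intro u h
      rcases h with h | h
      · exact le_trans (ih₁ u h) (le_trans (Nat.left_le_pair _ _) (Nat.right_le_pair _ _))
      · exact le_trans (ih₂ u h) (le_trans (Nat.right_le_pair _ _) (Nat.right_le_pair _ _))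
  | mul e₁ e₂ ih₁ ih₂ =>
      intro u h
      rcases h with h | h
      · exact le_trans (ih₁ u h) (le_trans (Nat.left_le_pair _ _) (Nat.right_le_pair _ _))
      · exact le_trans (ih₂ u h) (le_trans (Nat.right_le_pair _ _) (Nat.right_le_pair _ _))

lemma mentions_le_encBExp : ∀ (b : BExp) (u : Var), b.Mentions u → u ≤ encBExp b := by
  intro b
  induction b with
  | lt e₁ e₂ =>
      intro u h
      rcases h with h | h
      · exact le_trans (mentions_le_encAExp e₁ u h)
          (le_trans (Nat.left_le_pair _ _) (Nat.right_le_pair _ _))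
      · exact le_trans (mentions_le_encAExp e₂ u h)
          (le_trans (Nat.right_le_pair _ _) (Nat.right_le_pair _ _))
  | le e₁ e₂ =>
      intro u h
      rcases h with h | h
      · exact le_trans (mentions_le_encAExp e₁ u h)
          (le_trans (Nat.left_le_pair _ _) (Nat.right_le_pair _ _))
      · exact le_trans (mentions_le_encAExp e₂ u h)
          (le_trans (Nat.right_le_pair _ _) (Nat.right_le_pair _ _))
  | eq e₁ e₂ =>
      intro u h
      rcases h with h | h
      · exact le_trans (mentions_le_encAExp e₁ u h)
          (le_trans (Nat.left_le_pair _ _) (Nat.right_le_pair _ _))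
      · exact le_trans (mentions_le_encAExp e₂ u h)
          (le_trans (Nat.right_le_pair _ _) (Nat.right_le_pair _ _))
  | not b ih =>
      intro u h
      exact le_trans (ih u h) (Nat.right_le_pair _ _)
  | and b₁ b₂ ih₁ ih₂ =>
      intro u h
      rcases h with h | h
      · exact le_trans (ih₁ u h) (le_trans (Nat.left_le_pair _ _) (Nat.right_le_pair _ _))
      · exact le_trans (ih₂ u h) (le_trans (Nat.right_le_pair _ _) (Nat.right_le_pair _ _))
  | or b₁ b₂ ih₁ ih₂ =>
      intro u h
      rcases h with h | h
      · exact le_trans (ih₁ u h) (le_trans (Nat.left_le_pair _ _) (Nat.right_le_pair _ _))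
      · exact le_trans (ih₂ u h) (le_trans (Nat.right_le_pair _ _) (Nat.right_le_pair _ _))

lemma mentions_le_encProg : ∀ (P : Prog) (u : Var), P.Mentions u → u ≤ encProg P := by
  intro P
  induction P with
  | term => intro u h; exact absurd h (by simp [Prog.Mentions])
  | assign w e =>
      intro u h
      rcases h with h | h
      · subst h
        exact le_trans (Nat.left_le_pair _ _) (Nat.right_le_pair _ _)
      · exact le_trans (mentions_le_encAExp e u h)
          (le_trans (Nat.right_le_pair _ _) (Nat.right_le_pair _ _))
  | seq P₁ P₂ ih₁ ih₂ =>
      intro u h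
      rcases h with h | h
      · exact le_trans (ih₁ u h) (le_trans (Nat.left_le_pair _ _) (Nat.right_le_pair _ _))
      · exact le_trans (ih₂ u h) (le_trans (Nat.right_le_pair _ _) (Nat.right_le_pair _ _))
  | choice p hp P₁ P₂ ih₁ ih₂ =>
      intro u h
      rcases h with h | h
      · exact le_trans (ih₁ u h) (le_trans (Nat.left_le_pair _ _)
          (le_trans (Nat.right_le_pair _ _) (Nat.right_le_pair _ _)))
      · exact le_trans (ih₂ u h) (le_trans (Nat.right_le_pair _ _)
          (le_trans (Nat.right_le_pair _ _) (Nat.right_le_pair _ _)))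
  | whileDo b P ih =>
      intro u h
      rcases h with h | h
      · exact le_trans (mentions_le_encBExp b u h)
          (le_trans (Nat.left_le_pair _ _) (Nat.right_le_pair _ _))
      · exact le_trans (ih u h) (le_trans (Nat.right_le_pair _ _) (Nat.right_le_pair _ _))

lemma fresh (Q : Prog) : ¬ Q.Mentions (encProg Q + 1) := by
  intro h
  exact Nat.not_succ_le_self _ (mentions_le_encProg Q _ h)

lemma encNN_inj : Function.Injective encNN := by
  intro p q h
  simp only [encNN, Nat.pair_eq_pair] at h
  rw [← NNRat.num_div_den p, ← NNRat.num_div_den q, h.1, h.2]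

lemma encQ_inj : Function.Injective encQ := by
  intro p q h
  simp only [encQ, Nat.pair_eq_pair] at h
  have h1 : p.num = q.num := Encodable.encode_injective h.1
  exact Rat.ext h1 h.2

lemma encAExp_inj : ∀ e₁ e₂ : AExp, encAExp e₁ = encAExp e₂ → e₁ = e₂ := by
  intro e₁
  induction e₁ with
  | const q =>
      intro e₂ h
      cases e₂ <;> simp [encAExp, Nat.pair_eq_pair] at h
      rw [encQ_inj h]
  | var w =>
      intro e₂ h
      cases e₂ <;> simp [encAExp, Nat.pair_eq_pair] at h
      rw [h]
  | add e₁ e₂ ih₁ ih₂ =>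
      intro e h
      cases e <;> simp [encAExp, Nat.pair_eq_pair] at h
      rw [ih₁ _ h.1, ih₂ _ h.2]
  | sub e₁ e₂ ih₁ ih₂ =>
      intro e h
      cases e <;> simp [encAExp, Nat.pair_eq_pair] at h
      rw [ih₁ _ h.1, ih₂ _ h.2]
  | mul e₁ e₂ ih₁ ih₂ =>
      intro e h
      cases e <;> simp [encAExp, Nat.pair_eq_pair] at h
      rw [ih₁ _ h.1, ih₂ _ h.2]

lemma encBExp_inj : ∀ b₁ b₂ : BExp, encBExp b₁ = encBExp b₂ → b₁ = b₂ := by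
  intro b₁
  induction b₁ with
  | lt e₁ e₂ =>
      intro b₂ h
      cases b₂ <;> simp [encBExp, Nat.pair_eq_pair] at h
      rw [encAExp_inj _ _ h.1, encAExp_inj _ _ h.2]
  | le e₁ e₂ =>
      intro b₂ h
      cases b₂ <;> simp [encBExp, Nat.pair_eq_pair] at h
      rw [encAExp_inj _ _ h.1, encAExp_inj _ _ h.2]
  | eq e₁ e₂ =>
      intro b₂ h
      cases b₂ <;> simp [encBExp, Nat.pair_eq_pair] at h
      rw [encAExp_inj _ _ h.1, encAExp_inj _ _ h.2]
  | not b ih =>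
      intro b₂ h
      cases b₂ <;> simp [encBExp, Nat.pair_eq_pair] at h
      rw [ih _ h]
  | and c₁ c₂ ih₁ ih₂ =>
      intro b₂ h
      cases b₂ <;> simp [encBExp, Nat.pair_eq_pair] at h
      rw [ih₁ _ h.1, ih₂ _ h.2]
  | or c₁ c₂ ih₁ ih₂ =>
      intro b₂ h
      cases b₂ <;> simp [encBExp, Nat.pair_eq_pair] at h
      rw [ih₁ _ h.1, ih₂ _ h.2]

lemma encProg_inj : ∀ P₁ P₂ : Prog, encProg P₁ = encProg P₂ → P₁ = P₂ := by
  intro P₁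
  induction P₁ with
  | term =>
      intro P₂ h
      cases P₂ <;> simp [encProg, Nat.pair_eq_pair] at h
      rfl
  | assign w e =>
      intro P₂ h
      cases P₂ <;> simp [encProg, Nat.pair_eq_pair] at h
      rw [h.1, encAExp_inj _ _ h.2]
  | seq Q₁ Q₂ ih₁ ih₂ =>
      intro P₂ h
      cases P₂ <;> simp [encProg, Nat.pair_eq_pair] at h
      rw [ih₁ _ h.1, ih₂ _ h.2]
  | choice p hp Q₁ Q₂ ih₁ ih₂ =>
      intro P₂ h
      cases P₂ <;> simp [encProg, Nat.pair_eq_pair] at h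
      obtain ⟨h1, h2, h3⟩ := h
      have hpq := encNN_inj h1
      subst hpq
      rw [ih₁ _ h2, ih₂ _ h3]
  | whileDo b Q ih =>
      intro P₂ h
      cases P₂ <;> simp [encProg, Nat.pair_eq_pair] at h
      rw [encBExp_inj _ _ h.1, ih _ h.2]

lemma encV_inj : Function.Injective encV := by
  intro η₁ η₂ h
  have h' : ((η₁.support.sort (· ≤ ·)).map fun v => (v, encNN (η₁ v)))
      = ((η₂.support.sort (· ≤ ·)).map fun v => (v, encNN (η₂ v))) :=
    Encodable.encode_injective h
  have hmem : ∀ (u : Var) (m : ℕ) (η : V),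
      (u, m) ∈ ((η.support.sort (· ≤ ·)).map fun v => (v, encNN (η v)))
        ↔ u ∈ η.support ∧ m = encNN (η u) := by
    intro u m η
    simp only [List.mem_map, Finset.mem_sort]
    constructor
    · rintro ⟨x, hx, hxy⟩
      rw [Prod.ext_iff] at hxy
      obtain ⟨h1, h2⟩ := hxy
      subst h1
      exact ⟨hx, h2.symm⟩
    · rintro ⟨h1, rfl⟩
      exact ⟨u, h1, rfl⟩
  ext u
  by_cases h1 : u ∈ η₁.support
  · have : (u, encNN (η₁ u)) ∈ ((η₂.support.sort (· ≤ ·)).map fun v => (v, encNN (η₂ v))) := by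
      rw [← h']
      exact (hmem u _ η₁).mpr ⟨h1, rfl⟩
    obtain ⟨h2, h3⟩ := (hmem u _ η₂).mp this
    exact_mod_cast encNN_inj h3
  · by_cases h2 : u ∈ η₂.support
    · have : (u, encNN (η₂ u)) ∈ ((η₁.support.sort (· ≤ ·)).map fun v => (v, encNN (η₁ v))) := by
        rw [h']
        exact (hmem u _ η₂).mpr ⟨h2, rfl⟩
      exact absurd ((hmem u _ η₁).mp this).1 h1
    · rw [Finsupp.notMem_support_iff] at h1 h2
      rw [h1, h2]

lemma encProg_seq_surj {P : Prog} {x y : ℕ} (h : encProg P = Nat.pair 2 (Nat.pair x y)) :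
    ∃ P₁ P₂, P = .seq P₁ P₂ ∧ encProg P₁ = x ∧ encProg P₂ = y := by
  cases P <;> simp [encProg, Nat.pair_eq_pair] at h
  exact ⟨_, _, rfl, h.1, h.2⟩

/-- The reduction function `AST ≤ₘ EXP`, on codes. -/
def fRed (n : ℕ) : ℕ :=
  Nat.pair
    (Nat.pair 2 (Nat.pair (Nat.pair 1 (Nat.pair (n.unpair.1 + 1) (Nat.pair 0 (encQ 0))))
      (Nat.pair 2 (Nat.pair n.unpair.1
        (Nat.pair 1 (Nat.pair (n.unpair.1 + 1) (Nat.pair 0 (encQ 1))))))))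
    (Nat.pair n.unpair.2 (Nat.pair (n.unpair.1 + 1) (encNN 1)))

lemma fRed_eq (Q : Prog) (η : V) :
    fRed (encPV Q η)
      = encTup (Prog.seq (.assign (encProg Q + 1) (.const 0))
          (.seq Q (.assign (encProg Q + 1) (.const 1)))) η (encProg Q + 1) 1 := by
  simp [fRed, encPV, encTup, encProg, encAExp, Nat.unpair_pair]

lemma fRed_computable : Computable fRed := by
  have hpair : ∀ {f g : ℕ → ℕ}, Primrec f → Primrec g →
      Primrec (fun n => Nat.pair (f n) (g n)) := fun hf hg => Primrec₂.natPair.comp hf hg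
  have ha : Primrec fun n : ℕ => n.unpair.1 := Primrec.fst.comp Primrec.unpair
  have hb : Primrec fun n : ℕ => n.unpair.2 := Primrec.snd.comp Primrec.unpair
  have hv : Primrec fun n : ℕ => n.unpair.1 + 1 := Primrec.succ.comp ha
  have h0 : Primrec fun n : ℕ =>
      Nat.pair 1 (Nat.pair (n.unpair.1 + 1) (Nat.pair 0 (encQ 0))) :=
    hpair (Primrec.const 1) (hpair hv (hpair (Primrec.const 0) (Primrec.const (encQ 0))))
  have h1 : Primrec fun n : ℕ =>
      Nat.pair 1 (Nat.pair (n.unpair.1 + 1) (Nat.pair 0 (encQ 1))) :=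
    hpair (Primrec.const 1) (hpair hv (hpair (Primrec.const 0) (Primrec.const (encQ 1))))
  exact (hpair
    (hpair (Primrec.const 2) (hpair h0 (hpair (Primrec.const 2) (hpair ha h1))))
    (hpair hb (hpair hv (Primrec.const (encNN 1))))).to_comp

end Aux

/-- `AST ≤ₘ EXP` via the map sending `(Q, η)` to `(P, η, v, 1)` where `v` does
not occur in `Q` and `P` is `v := 0; Q; v := 1`:
`Pr_{Q,η}(↓) = 1` iff `E_{P,η}(v) = 1`. -/
theorem AST_reduces_to_EXP :
    ∃ f : ℕ → ℕ, Computable f ∧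
      (∀ n : ℕ, n ∈ ASTset ↔ f n ∈ EXPset) ∧
      (∀ (Q : Prog) (η : V),
        ∃ (v : Var) (P : Prog),
          ¬ Q.Mentions v ∧
          P = Prog.seq (Prog.assign v (AExp.const 0))
                (Prog.seq Q (Prog.assign v (AExp.const 1))) ∧
          f (encPV Q η) = encTup P η v 1 ∧
          (TermProb Q η = 1 ↔ ExpOut P η v = 1)) := by
  refine ⟨fRed, fRed_computable, ?_, ?_⟩
  · intro n
    constructor
    · rintro ⟨Q, η, rfl, hT⟩
      refine ⟨_, η, encProg Q + 1, 1, fRed_eq Q η, ?_⟩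
      rw [expOut_eq (fresh Q) η, toE_one, hT]
    · rintro ⟨P₀, η₀, v₀, q₀, hEnc, hE⟩
      rw [encTup] at hEnc
      unfold fRed at hEnc
      rw [Nat.pair_eq_pair] at hEnc
      obtain ⟨hP, hRest⟩ := hEnc
      rw [Nat.pair_eq_pair] at hRest
      obtain ⟨hV, hRest2⟩ := hRest
      rw [Nat.pair_eq_pair] at hRest2
      obtain ⟨hv0, hq0⟩ := hRest2
      obtain ⟨B₁, B₂, rfl, hB₁, hB₂⟩ := encProg_seq_surj hP.symm
      obtain ⟨Q, R', rfl, hQ, hR'⟩ := encProg_seq_surj hB₂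
      have hB₁' : B₁ = Prog.assign (n.unpair.1 + 1) (.const 0) := by
        apply encProg_inj
        rw [hB₁]
        simp [encProg, encAExp]
      have hR'' : R' = Prog.assign (n.unpair.1 + 1) (.const 1) := by
        apply encProg_inj
        rw [hR']
        simp [encProg, encAExp]
      have hq1 : q₀ = 1 := (encNN_inj hq0).symm
      subst hB₁' hR'' hq1
      rw [← hv0] at hE
      rw [← hQ] at hE
      rw [expOut_eq (fresh Q) η₀, toE_one] at hE
      exact ⟨Q, η₀, by rw [encPV, hQ, ← hV, Nat.pair_unpair], hE⟩
  · intro Q η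
    refine ⟨encProg Q + 1, _, fresh Q, rfl, fRed_eq Q η, ?_⟩
    rw [expOut_eq (fresh Q) η]

end PGCLHardness
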